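/- Let γ be a real number. Define, for real x, y and t, c(x,y,t) = (1 − e^{−2γt}·cos x·cos y)/2, p(x,y,t) = e^{−2t}(cos x·cos y − 1), u₁(x,y,t) = e^{−2t}·sin x·cos y, u₂(x,y,t) = e^{−2t}·cos x·sin y, q(x,y,t) = 2e^{−2t}, and c̃(x,y,t) = (e^{−2γt}((1/2)sin²x·cos²y + (1/2)cos²x·sin²y − cos x·cos y) + 1)/2. Then for all real x, y, t: (i) (u₁, u₂) = −(∂p/∂x, ∂p/∂y); (ii) ∂p/∂t + ∂u₁/∂x + ∂u₂/∂y = q; (iii) ∂c/∂t + u₁·∂c/∂x + u₂·∂c/∂y − γ·(∂²c/∂x² + ∂²c/∂y²) = (c̃ − c)·q. Moreover, on the boundary of [0,2π]²: u₁(0,y,t) = u₁(2π,y,t) = 0, u₂(x,0,t) = u₂(x,2π,t) = 0, ∂c/∂x(0,y,t) = ∂c/∂x(2π,y,t) = 0, ∂c/∂y(x,0,t) = ∂c/∂y(x,2π,t) = 0; c(x,y,0) = (1 − cos x·cos y)/2 and p(x,y,0) = cos x·cos y − 1; and if γ ≥ 0 then 0 ≤ c(x,y,t) ≤ 1 for all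 x, y and all t ≥ 0. -/

import Mathlib

/-!
Every field is a single Fourier mode `cos x cos y` (or its partial derivatives) times an
exponential in time, so all the equations reduce to trigonometric identities. The
concentration `c` is `1/2` minus a mode decaying at rate `2γ`, hence solves the heat equation
`c_t = γ Δc`; the injected concentration `c̃` is chosen so that `(c̃ - c) q` equals the
advection term `u · ∇c`. The bounds hold because `|e^{-2γt} cos x cos y| ≤ 1` for `γ t ≥ 0`.
-/

noncomputable section

namespace ExactSolution2D

/-- Concentration `c(x,y,t) = (1 - e^{-2γt}·cos x·cos y)/2`. -/
def c (γ x y t : ℝ) : ℝ := (1 - Real.exp (-(2 * γ * t)) * Real.cos x * Real.cos y) / 2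

/-- Pressure `p(x,y,t) = e^{-2t}(cos x·cos y - 1)`. -/
def p (x y t : ℝ) : ℝ := Real.exp (-(2 * t)) * (Real.cos x * Real.cos y - 1)

/-- First velocity component `u₁(x,y,t) = e^{-2t}·sin x·cos y`. -/
def u1 (x y t : ℝ) : ℝ := Real.exp (-(2 * t)) * Real.sin x * Real.cos y

/-- Second velocity component `u₂(x,y,t) = e^{-2t}·cos x·sin y`. -/
def u2 (x y t : ℝ) : ℝ := Real.exp (-(2 * t)) * Real.cos x * Real.sin y

/-- External volumetric flow rate `q(x,y,t) = 2e^{-2t}`. -/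
def q (x y t : ℝ) : ℝ := 2 * Real.exp (-(2 * t))

/-- Injected concentration
`c̃ = (e^{-2γt}((1/2)sin²x·cos²y + (1/2)cos²x·sin²y - cos x·cos y) + 1)/2`. -/
def ctld (γ x y t : ℝ) : ℝ :=
  (Real.exp (-(2 * γ * t)) *
      ((1 / 2) * Real.sin x ^ 2 * Real.cos y ^ 2
        + (1 / 2) * Real.cos x ^ 2 * Real.sin y ^ 2
        - Real.cos x * Real.cos y) + 1) / 2

open Real

lemma hasDerivAt_exp_neg_mul (a t : ℝ) :
    HasDerivAt (fun s => exp (-(a * s))) (-a * exp (-(a * t))) t := by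
  simpa [mul_comm] using (((hasDerivAt_id t).const_mul a).neg).exp

section Pressure

variable (x y t : ℝ)

lemma deriv_p_x : deriv (fun x' => p x' y t) x = -u1 x y t := by
  have h := (((hasDerivAt_cos x).mul_const (cos y)).sub_const 1).const_mul (exp (-(2 * t)))
  exact (h.congr_deriv (by rw [u1]; ring)).deriv

lemma deriv_p_y : deriv (fun y' => p x y' t) y = -u2 x y t := by
  have h := (((hasDerivAt_cos y).const_mul (cos x)).sub_const 1).const_mul (exp (-(2 * t)))
  exact (h.congr_deriv (by rw [u2]; ring)).deriv

lemma deriv_p_t : deriv (fun t' => p x y t') t = -2 * p x y t := by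
  have h := (hasDerivAt_exp_neg_mul 2 t).mul_const (cos x * cos y - 1)
  exact (h.congr_deriv (by rw [p]; ring)).deriv

lemma deriv_u1_x : deriv (fun x' => u1 x' y t) x = exp (-(2 * t)) * cos x * cos y :=
  (((hasDerivAt_sin x).const_mul (exp (-(2 * t)))).mul_const (cos y)).deriv

lemma deriv_u2_y : deriv (fun y' => u2 x y' t) y = exp (-(2 * t)) * cos x * cos y :=
  ((hasDerivAt_sin y).const_mul (exp (-(2 * t)) * cos x)).deriv

lemma pressure_equation :
    deriv (fun t' => p x y t') t + deriv (fun x' => u1 x' y t) x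
      + deriv (fun y' => u2 x y' t) y = q x y t := by
  rw [deriv_p_t, deriv_u1_x, deriv_u2_y, p, q]
  ring

end Pressure

section Concentration

variable (γ x y t : ℝ)

lemma hasDerivAt_c_x :
    HasDerivAt (fun x' => c γ x' y t) (exp (-(2 * γ * t)) * sin x * cos y / 2) x := by
  have h := ((((hasDerivAt_cos x).const_mul (exp (-(2 * γ * t)))).mul_const
    (cos y)).const_sub 1).div_const 2
  exact h.congr_deriv (by ring)

lemma hasDerivAt_c_y :
    HasDerivAt (fun y' => c γ x y' t) (exp (-(2 * γ * t)) * cos x * sin y / 2) y := by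
  have h := (((hasDerivAt_cos y).const_mul (exp (-(2 * γ * t)) * cos x)).const_sub 1).div_const 2
  exact h.congr_deriv (by ring)

lemma deriv_c_x :
    deriv (fun x' => c γ x' y t) = fun x => exp (-(2 * γ * t)) * sin x * cos y / 2 :=
  funext fun x => (hasDerivAt_c_x γ x y t).deriv

lemma deriv_c_y :
    deriv (fun y' => c γ x y' t) = fun y => exp (-(2 * γ * t)) * cos x * sin y / 2 :=
  funext fun y => (hasDerivAt_c_y γ x y t).deriv

lemma deriv_deriv_c_x :
    deriv (deriv (fun x' => c γ x' y t)) x = exp (-(2 * γ * t)) * cos x * cos y / 2 := by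
  rw [deriv_c_x]
  exact ((((hasDerivAt_sin x).const_mul (exp (-(2 * γ * t)))).mul_const (cos y)).div_const 2).deriv

lemma deriv_deriv_c_y :
    deriv (deriv (fun y' => c γ x y' t)) y = exp (-(2 * γ * t)) * cos x * cos y / 2 := by
  rw [deriv_c_y]
  exact (((hasDerivAt_sin y).const_mul (exp (-(2 * γ * t)) * cos x)).div_const 2).deriv

lemma deriv_c_t : deriv (fun t' => c γ x y t') t = γ * exp (-(2 * γ * t)) * cos x * cos y := by
  have h := ((((hasDerivAt_exp_neg_mul (2 * γ) t).mul_const (cos x)).mul_const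
    (cos y)).const_sub 1).div_const 2
  exact (h.congr_deriv (by ring)).deriv

lemma heat_equation_c :
    deriv (fun t' => c γ x y t') t
      = γ * (deriv (deriv (fun x' => c γ x' y t)) x + deriv (deriv (fun y' => c γ x y' t)) y) := by
  rw [deriv_c_t, deriv_deriv_c_x, deriv_deriv_c_y]
  ring

lemma advection_c :
    u1 x y t * deriv (fun x' => c γ x' y t) x + u2 x y t * deriv (fun y' => c γ x y' t) y
      = (ctld γ x y t - c γ x y t) * q x y t := by
  rw [deriv_c_x, deriv_c_y, u1, u2, ctld, c, q]
  ring

lemma concentration_equation :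
    deriv (fun t' => c γ x y t') t
      + u1 x y t * deriv (fun x' => c γ x' y t) x
      + u2 x y t * deriv (fun y' => c γ x y' t) y
      - γ * (deriv (deriv (fun x' => c γ x' y t)) x
            + deriv (deriv (fun y' => c γ x y' t)) y)
      = (ctld γ x y t - c γ x y t) * q x y t := by
  rw [← advection_c, heat_equation_c]
  ring

end Concentration

lemma c_mem_Icc (x y : ℝ) {γ t : ℝ} (hγ : 0 ≤ γ) (ht : 0 ≤ t) : c γ x y t ∈ Set.Icc 0 1 := by
  have hexp : |exp (-(2 * γ * t))| ≤ 1 := by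
    rw [abs_of_pos (exp_pos _), exp_le_one_iff, neg_nonpos]
    positivity
  have hmode : |exp (-(2 * γ * t)) * cos x * cos y| ≤ 1 := by
    rw [abs_mul, abs_mul]
    exact mul_le_one₀ (mul_le_one₀ hexp (abs_nonneg _) (abs_cos_le_one x)) (abs_nonneg _)
      (abs_cos_le_one y)
  rw [abs_le] at hmode
  constructor <;> rw [c] <;> linarith [hmode.1, hmode.2]

/-- Example 4.4: the constructed analytical solution of the 2D compressible miscible
displacement system with `φ = κ = μ = 1`, `z₁ = z₂ = 1` and `D = γ·I`. -/
theorem exact_solution_2d (γ : ℝ) :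
    -- (i) Darcy's law: (u₁, u₂) = -(p_x, p_y)
    (∀ x y t : ℝ, u1 x y t = -(deriv (fun x' => p x' y t) x)) ∧
    (∀ x y t : ℝ, u2 x y t = -(deriv (fun y' => p x y' t) y)) ∧
    -- (ii) pressure equation: p_t + (u₁)_x + (u₂)_y = q
    (∀ x y t : ℝ,
      deriv (fun t' => p x y t') t + deriv (fun x' => u1 x' y t) x
        + deriv (fun y' => u2 x y' t) y = q x y t) ∧
    -- (iii) concentration equation: c_t + u₁c_x + u₂c_y - γ(c_xx + c_yy) = (c̃ - c)q
    (∀ x y t : ℝ,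
      deriv (fun t' => c γ x y t') t
        + u1 x y t * deriv (fun x' => c γ x' y t) x
        + u2 x y t * deriv (fun y' => c γ x y' t) y
        - γ * (deriv (deriv (fun x' => c γ x' y t)) x
              + deriv (deriv (fun y' => c γ x y' t)) y)
        = (ctld γ x y t - c γ x y t) * q x y t) ∧
    -- boundary conditions on ∂([0,2π]²)
    (∀ y t : ℝ, u1 0 y t = 0 ∧ u1 (2 * Real.pi) y t = 0) ∧
    (∀ x t : ℝ, u2 x 0 t = 0 ∧ u2 x (2 * Real.pi) t = 0) ∧
    (∀ y t : ℝ, deriv (fun x' => c γ x' y t) 0 = 0 ∧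
      deriv (fun x' => c γ x' y t) (2 * Real.pi) = 0) ∧
    (∀ x t : ℝ, deriv (fun y' => c γ x y' t) 0 = 0 ∧
      deriv (fun y' => c γ x y' t) (2 * Real.pi) = 0) ∧
    -- initial conditions
    (∀ x y : ℝ, c γ x y 0 = (1 - Real.cos x * Real.cos y) / 2) ∧
    (∀ x y : ℝ, p x y 0 = Real.cos x * Real.cos y - 1) ∧
    -- bounds: 0 ≤ c ≤ 1 for t ≥ 0 when γ ≥ 0
    (0 ≤ γ → ∀ x y t : ℝ, 0 ≤ t → 0 ≤ c γ x y t ∧ c γ x y t ≤ 1) := by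
  refine ⟨fun x y t => by rw [deriv_p_x, neg_neg], fun x y t => by rw [deriv_p_y, neg_neg],
    pressure_equation, concentration_equation γ, fun y t => ?_, fun x t => ?_,
    fun y t => ?_, fun x t => ?_, fun x y => by simp [c], fun x y => by simp [p],
    fun hγ x y t ht => c_mem_Icc x y hγ ht⟩
  · simp [u1, sin_two_pi]
  · simp [u2, sin_two_pi]
  · simp [deriv_c_x, sin_two_pi]
  · simp [deriv_c_y, sin_two_pi]

end ExactSolution2D
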